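/- Let n ≥ 2 and 1 ≤ k ≤ n. Every k-dimensional linear subspace W of ℂⁿ lies in the B_{n−1}-orbit of exactly one subspace from the following list: (1) span{e_{j_1},…,e_{j_k}} for a k-element subset {j_1,…,j_k} of {1,…,n−1}; (2) span{e_{j_1},…,e_{j_{k−1}}, e_n} for a (k−1)-element subset {j_1,…,j_{k−1}} of {1,…,n−1}; (3) span{e_{j_1},…,e_{j_{k−1}}, e_{j_k}+e_n} for a k-element subset {j_1,…,j_k} of {1,…,n−1} together with a distinguished element j_k of that subset. Moreover, no two distinct subspaces from this list lie in the same B_{n−1}-orbit. -/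

import Mathlib

open scoped BigOperators

noncomputable section

/-- Membership in the subgroup `B_{n-1}` of `GL(n, ℂ)`: invertible upper triangular matrices
`g` with `g ₙₙ = 1` and `g ᵢₙ = 0` for `i < n` (indices `0, …, n-1`; the last index plays
the role of `n`). -/
def memB (n : ℕ) (g : Matrix (Fin n) (Fin n) ℂ) : Prop :=
  IsUnit g ∧
  (∀ i j : Fin n, (j : ℕ) < (i : ℕ) → g i j = 0) ∧
  (∀ i : Fin n, (i : ℕ) + 1 = n → g i i = 1) ∧
  (∀ i j : Fin n, (j : ℕ) + 1 = n → (i : ℕ) + 1 ≠ n → g i j = 0)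

/-- A complete flag `V₁ ⊂ V₂ ⊂ ⋯ ⊂ Vₙ = ℂⁿ` in `ℂⁿ` (so `V i` has dimension `i + 1`
for the 0-indexed `i : Fin n`). -/
structure CompleteFlag (n : ℕ) where
  V : Fin n → Submodule ℂ (Fin n → ℂ)
  mono : ∀ i j : Fin n, i ≤ j → V i ≤ V j
  dimV : ∀ i : Fin n, Module.finrank ℂ (V i) = (i : ℕ) + 1

/-- Two complete flags lie in the same `B_{n-1}`-orbit:
`F = g · F'` for some `g ∈ B_{n-1}`. -/
def flagRel (n : ℕ) (F F' : CompleteFlag n) : Prop :=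
  ∃ g : Matrix (Fin n) (Fin n) ℂ, memB n g ∧
    ∀ i, (F'.V i).map (Matrix.toLin' g) = F.V i

/-- The standard basis vector `e_{j+1}` of `ℂⁿ` (for the 0-indexed `j : Fin n`). -/
def stdVec (n : ℕ) (j : Fin n) : Fin n → ℂ := Pi.single j 1

/-- The hat vector `ê_{j+1} = e_{j+1} + e_n` of `ℂⁿ` (for the 0-indexed `j : Fin n`,
meaningful when `j + 1 < n`). -/
def hatVec (n : ℕ) (j : Fin n) : Fin n → ℂ :=
  Pi.single j 1 + Pi.single (⟨n - 1, by have := j.isLt; omega⟩ : Fin n) 1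

/-- The list of representative subspaces for `B_{n-1}`-orbits on the Grassmannian of
`k`-planes in `ℂⁿ`: (1) spans of standard basis vectors `e_j`, `j ≤ n-1`; (2) spans of
`k-1` such vectors together with `e_n`; (3) spans of `k-1` such vectors together with a
hat vector `e_{j₀} + e_n`. -/
def repSet (n k : ℕ) (hn : 1 ≤ n) : Set (Submodule ℂ (Fin n → ℂ)) :=
  {W | ∃ J : Finset (Fin n), (∀ j ∈ J, (j : ℕ) + 1 < n) ∧ J.card = k ∧
      W = Submodule.span ℂ (stdVec n '' ↑J)} ∪
  {W | ∃ J : Finset (Fin n), (∀ j ∈ J, (j : ℕ) + 1 < n) ∧ J.card + 1 = k ∧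
      W = Submodule.span ℂ
        (insert (stdVec n (⟨n - 1, by omega⟩ : Fin n)) (stdVec n '' ↑J))} ∪
  {W | ∃ (J : Finset (Fin n)) (j₀ : Fin n), j₀ ∈ J ∧ (∀ j ∈ J, (j : ℕ) + 1 < n) ∧
      J.card = k ∧
      W = Submodule.span ℂ (insert (hatVec n j₀) (stdVec n '' ↑(J.erase j₀)))}

/-
An element of `B_{n-1}` is `diag(b, 1)` with `b` upper triangular, so it fixes `e_n` and preserves
both the standard flag `E_j = ⟨e_i | i < j⟩` and the shifted flag `E_j + ⟨e_n⟩`. Hence, for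
either of these flags `F`, the set of indices at which `dim (W ∩ F_j)` jumps is an orbit
invariant. For the three
kinds of representatives these pairs of jump sets are `(J, J)`, `(J ∪ {n}, J)` and
`((J \ {j_k}) ∪ {n}, J)`, which tell distinct representatives apart.

Conversely, for each jump `j` of `W` along the standard flag pick `w_j ∈ W ∩ E_{j+1}` with
`w_j(j) ≠ 0`; these are the columns of an element of `B_{n-1}` mapping the coordinate subspace of
the jump set onto `W`, provided `e_n ∈ W` whenever `n` is a jump. Otherwise `W ∩ E_{n-1}` has
codimension one in `W` and the shifted flag has one jump `j_k` more than the standard flag below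
`n`; a vector of `W` realising it, normalised to have last coordinate `1`, is the image of
`e_{j_k} + e_n`.
-/

namespace BorelOrbits

open Submodule Module Finset Matrix

section Chain

variable {K V : Type*} [Field K] [AddCommGroup V] [Module K V] [FiniteDimensional K V]

lemma finrank_inf_add_finrank_le_of_le (U : Submodule K V) {A B : Submodule K V} (hAB : A ≤ B) :
    finrank K ↥(U ⊓ B) + finrank K A ≤ finrank K ↥(U ⊓ A) + finrank K B := by
  have hsum := finrank_sup_add_finrank_inf_eq (U ⊓ B) A
  have hinf : U ⊓ B ⊓ A = U ⊓ A := by rw [inf_assoc, inf_eq_right.mpr hAB]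
  have hsup : finrank K ↥(U ⊓ B ⊔ A) ≤ finrank K B := finrank_mono (sup_le inf_le_right hAB)
  rw [hinf] at hsum
  omega

open Classical in
lemma finrank_eq_finrank_zero_add_card_filter_lt {F : ℕ → Submodule K V} (hF : Monotone F)
    (hstep : ∀ i, finrank K (F (i + 1)) ≤ finrank K (F i) + 1) (N : ℕ) :
    finrank K (F N) = finrank K (F 0) + #{i ∈ range N | F i < F (i + 1)} := by
  induction N with
  | zero => simp
  | succ N ih =>
    rw [range_add_one, filter_insert]
    split_ifs with hlt
    · rw [card_insert_of_notMem (by simp)]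
      have := finrank_lt_finrank_of_lt hlt
      have := hstep N
      omega
    · rw [← (hF N.le_succ).eq_of_not_lt hlt, ih]

end Chain

section Coordinate

variable {K ι : Type*} [Field K]

def coordSubspace (S : Finset ι) : Submodule K (ι → K) where
  carrier := {x | ∀ i ∉ S, x i = 0}
  add_mem' hx hy i hi := by simp [hx i hi, hy i hi]
  zero_mem' _ _ := rfl
  smul_mem' c x hx i hi := by simp [hx i hi]

variable {S T : Finset ι}

lemma coordSubspace_mono (h : S ⊆ T) : coordSubspace (K := K) S ≤ coordSubspace T :=
  fun _ hx i hi => hx i fun hiS => hi (h hiS)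

lemma coordSubspace_empty : coordSubspace (K := K) (∅ : Finset ι) = ⊥ :=
  eq_bot_iff.mpr fun _ hx => (mem_bot K).mpr (funext fun i => hx i (notMem_empty i))

lemma coordSubspace_univ [Fintype ι] : coordSubspace (K := K) (univ : Finset ι) = ⊤ :=
  eq_top_iff.mpr fun _ _ i hi => absurd (mem_univ i) hi

variable [DecidableEq ι]

lemma single_mem_coordSubspace {i : ι} (hi : i ∈ S) (c : K) :
    Pi.single i c ∈ coordSubspace S := fun j hj => by
  rw [Pi.single_eq_of_ne (fun h : j = i => hj (h ▸ hi))]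

lemma span_single_image (S : Finset ι) :
    span K ((fun i => Pi.single i (1 : K)) '' S) = coordSubspace S := by
  refine le_antisymm (span_le.mpr ?_) fun x hx => ?_
  · rintro _ ⟨i, hi, rfl⟩
    exact single_mem_coordSubspace hi 1
  · have hsum : ∑ i ∈ S, x i • Pi.single i (1 : K) = x := by
      ext j
      by_cases hj : j ∈ S <;> simp [Finset.sum_apply, Pi.single_apply, hj, hx j]
    rw [← hsum]
    exact sum_mem fun i hi => smul_mem _ _ (subset_span ⟨i, hi, rfl⟩)

lemma span_insert_single_image (i : ι) (S : Finset ι) :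
    span K (insert (Pi.single i (1 : K)) ((fun j => Pi.single j (1 : K)) '' S)) =
      coordSubspace (insert i S) := by
  rw [← span_single_image, coe_insert, Set.image_insert_eq]

lemma finrank_coordSubspace (S : Finset ι) : finrank K (coordSubspace (K := K) S) = #S := by
  have hli : LinearIndependent K fun i : S => (Pi.single (i : ι) (1 : K) : ι → K) :=
    (Pi.linearIndependent_single_one ι K).comp _ Subtype.val_injective
  have hrange : Set.range (fun i : S => (Pi.single (i : ι) (1 : K) : ι → K)) =
      (fun i => Pi.single i (1 : K)) '' S := by
    ext; simp
  rw [← span_single_image, ← hrange, finrank_span_eq_card hli, Fintype.card_coe]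

lemma finrank_inf_coordSubspace_le_of_subset [Fintype ι] (U : Submodule K (ι → K))
    {S T : Finset ι} (hST : S ⊆ T) (hcard : #T ≤ #S + 1) :
    finrank K ↥(U ⊓ coordSubspace T) ≤ finrank K ↥(U ⊓ coordSubspace S) + 1 := by
  have h := finrank_inf_add_finrank_le_of_le U (coordSubspace_mono (K := K) hST)
  rw [finrank_coordSubspace, finrank_coordSubspace] at h
  omega

end Coordinate

section Flag

variable {K ι : Type*} [Field K] [Fintype ι] [DecidableEq ι] [LinearOrder ι]
  [LocallyFiniteOrderBot ι]

open Classical in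
/-- With `A = ∅` these are the jumps of `U` along the standard flag `⟨e_i | i < j⟩`; with `A`
the last index they are the jumps along `⟨e_i | i < j⟩ + ⟨e_n⟩`, a flag that `B_{n-1}` also
preserves. -/
def flagJumps (A : Finset ι) (U : Submodule K (ι → K)) : Finset ι :=
  {j | U ⊓ coordSubspace (A ∪ Iio j) < U ⊓ coordSubspace (A ∪ Iic j)}

variable {A : Finset ι} {U : Submodule K (ι → K)} {j : ι}

lemma mem_flagJumps :
    j ∈ flagJumps A U ↔
      U ⊓ coordSubspace (A ∪ Iio j) < U ⊓ coordSubspace (A ∪ Iic j) := by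
  simp [flagJumps]

lemma mem_flagJumps_iff :
    j ∈ flagJumps A U ↔
      j ∉ A ∧ ∃ w ∈ U, w ∈ coordSubspace (A ∪ Iic j) ∧ w j ≠ 0 := by
  rw [mem_flagJumps]
  constructor
  · intro hlt
    obtain ⟨w, ⟨hwU, hwj⟩, hw⟩ := SetLike.exists_of_lt hlt
    obtain ⟨i, hi, hwi⟩ : ∃ i ∉ A ∪ Iio j, w i ≠ 0 := by
      by_contra! h
      exact hw ⟨hwU, h⟩
    obtain rfl : i = j := by
      by_contra hij
      refine hwi (hwj i ?_)
      simp only [mem_union, mem_Iio, mem_Iic, not_or, not_lt] at hi ⊢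
      exact ⟨hi.1, not_le.mpr (lt_of_le_of_ne hi.2 (Ne.symm hij))⟩
    exact ⟨fun hA => hi (mem_union_left _ hA), w, hwU, hwj, hwi⟩
  · rintro ⟨hjA, w, hwU, hwj, hw⟩
    refine SetLike.lt_iff_le_and_exists.mpr ⟨inf_le_inf_left _ (coordSubspace_mono ?_),
      w, mem_inf.mpr ⟨hwU, hwj⟩, fun hw' => hw ((mem_inf.mp hw').2 j (by simp [hjA]))⟩
    exact union_subset_union_right Iio_subset_Iic_self

lemma flagJumps_coordSubspace (A J : Finset ι) :
    flagJumps A (coordSubspace (K := K) J) = J \ A := by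
  ext j
  rw [mem_flagJumps_iff, mem_sdiff]
  constructor
  · rintro ⟨hjA, w, hwJ, -, hwj⟩
    exact ⟨by_contra fun hj => hwj (hwJ j hj), hjA⟩
  · rintro ⟨hjJ, hjA⟩
    exact ⟨hjA, Pi.single j 1, single_mem_coordSubspace hjJ 1,
      single_mem_coordSubspace (by simp) 1, by simp⟩

lemma flagJumps_empty_coordSubspace (J : Finset ι) :
    flagJumps ∅ (coordSubspace (K := K) J) = J := by
  rw [flagJumps_coordSubspace, sdiff_empty]

lemma flagJumps_singleton_coordSubspace {i : ι} {J : Finset ι} (hi : i ∉ J) :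
    flagJumps {i} (coordSubspace (K := K) J) = J := by
  rw [flagJumps_coordSubspace, sdiff_singleton_eq_erase, erase_eq_of_notMem hi]

lemma flagJumps_singleton_coordSubspace_insert {i : ι} {J : Finset ι} (hi : i ∉ J) :
    flagJumps {i} (coordSubspace (K := K) (insert i J)) = J := by
  rw [flagJumps_coordSubspace, sdiff_singleton_eq_erase, erase_insert hi]

lemma flagJumps_map {f : (ι → K) →ₗ[K] ι → K} (hf : Function.Injective f)
    (hIio : ∀ j, (coordSubspace (A ∪ Iio j)).map f = coordSubspace (A ∪ Iio j))
    (hIic : ∀ j, (coordSubspace (A ∪ Iic j)).map f = coordSubspace (A ∪ Iic j))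
    (U : Submodule K (ι → K)) :
    flagJumps A (U.map f) = flagJumps A U := by
  ext j
  rw [mem_flagJumps, mem_flagJumps]
  have h := map_lt_map_iff_of_injective hf (p := U ⊓ coordSubspace (A ∪ Iio j))
    (q := U ⊓ coordSubspace (A ∪ Iic j))
  rwa [map_inf _ hf, map_inf _ hf, hIio, hIic] at h

lemma exists_pivotVectors (U : Submodule K (ι → K)) :
    ∃ w : ι → ι → K,
      ∀ j ∈ flagJumps ∅ U, w j ∈ U ∧ w j ∈ coordSubspace (Iic j) ∧ w j j ≠ 0 := by
  have h : ∀ j ∈ flagJumps ∅ U, ∃ w ∈ U, w ∈ coordSubspace (Iic j) ∧ w j ≠ 0 :=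
    fun j hj => by simpa using (mem_flagJumps_iff.mp hj).2
  choose! w hwU hw using h
  exact ⟨w, fun j hj => ⟨hwU j hj, hw j hj⟩⟩

end Flag

section FinFlag

variable {K : Type*} [Field K] {n : ℕ}

lemma filter_val_lt_eq_Iio (j : Fin n) : (univ.filter fun i : Fin n => (i : ℕ) < j) = Iio j := by
  ext i; simp

lemma filter_val_lt_add_one_eq_Iic (j : Fin n) :
    (univ.filter fun i : Fin n => (i : ℕ) < j + 1) = Iic j := by
  ext i; simp only [mem_filter, mem_univ, true_and, mem_Iic, Fin.le_def]; omega

lemma card_union_filter_val_lt_add_one_le (A : Finset (Fin n)) (i : ℕ) :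
    #(A ∪ univ.filter fun j : Fin n => (j : ℕ) < i + 1) ≤
      #(A ∪ univ.filter fun j : Fin n => (j : ℕ) < i) + 1 := by
  have hsub : A ∪ univ.filter (fun j : Fin n => (j : ℕ) < i + 1) ⊆
      (A ∪ univ.filter fun j : Fin n => (j : ℕ) < i) ∪
        univ.filter fun j => (j : ℕ) = i := by
    intro j hj
    simp only [mem_union, mem_filter, mem_univ, true_and] at hj ⊢
    rcases hj with hj | hj
    · exact Or.inl (Or.inl hj)
    · rcases Nat.lt_succ_iff_lt_or_eq.mp hj with hj | hj
      exacts [Or.inl (Or.inr hj), Or.inr hj]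
  have hone : #(univ.filter fun j : Fin n => (j : ℕ) = i) ≤ 1 :=
    card_le_one.mpr fun a ha b hb => Fin.ext (by simp only [mem_filter] at ha hb; omega)
  have := card_union_le (A ∪ univ.filter fun j : Fin n => (j : ℕ) < i)
    (univ.filter fun j : Fin n => (j : ℕ) = i)
  have := card_le_card hsub
  omega

lemma finrank_inf_add_card_flagJumps (A : Finset (Fin n)) (U : Submodule K (Fin n → K)) :
    finrank K ↥(U ⊓ coordSubspace A) + #(flagJumps A U) = finrank K U := by
  classical
  let T : ℕ → Finset (Fin n) := fun i => A ∪ univ.filter fun j => (j : ℕ) < i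
  let F : ℕ → Submodule K (Fin n → K) := fun i => U ⊓ coordSubspace (T i)
  have hT : Monotone T := fun i i' h => union_subset_union_right fun j hj => by
    simp only [mem_filter, mem_univ, true_and] at hj ⊢; omega
  have hF : Monotone F := fun i i' h => inf_le_inf_left _ (coordSubspace_mono (hT h))
  have hstep : ∀ i, finrank K (F (i + 1)) ≤ finrank K (F i) + 1 := fun i =>
    finrank_inf_coordSubspace_le_of_subset U (hT (Nat.le_add_right i 1))
      (card_union_filter_val_lt_add_one_le A i)
  have hFj : ∀ j : Fin n,
      F j = U ⊓ coordSubspace (A ∪ Iio j) ∧ F (j + 1) = U ⊓ coordSubspace (A ∪ Iic j) :=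
    fun j => by simp only [F, T, filter_val_lt_eq_Iio, filter_val_lt_add_one_eq_Iic, and_self]
  have hjumps : #(flagJumps A U) = #{i ∈ range n | F i < F (i + 1)} := by
    refine card_bij (fun j _ => (j : ℕ)) (fun j hj => ?_) (fun _ _ _ _ h => Fin.ext h)
      (fun i hi => ?_)
    · rw [mem_flagJumps, ← (hFj j).1, ← (hFj j).2] at hj
      exact mem_filter.mpr ⟨mem_range.mpr j.2, hj⟩
    · obtain ⟨hin, hi⟩ := mem_filter.mp hi
      refine ⟨⟨i, mem_range.mp hin⟩, ?_, rfl⟩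
      rwa [mem_flagJumps, ← (hFj _).1, ← (hFj _).2]
  have hF0 : F 0 = U ⊓ coordSubspace A := by simp [F, T]
  have hFn : F n = U := by
    have hTn : T n = univ := eq_univ_of_forall fun j => mem_union_right _ (by simp)
    simp [F, hTn, coordSubspace_univ]
  have htel := finrank_eq_finrank_zero_add_card_filter_lt hF hstep n
  rw [hF0, hFn] at htel
  omega

lemma card_flagJumps_empty (U : Submodule K (Fin n → K)) : #(flagJumps ∅ U) = finrank K U := by
  have h := finrank_inf_add_card_flagJumps ∅ U
  rwa [coordSubspace_empty, inf_bot_eq, finrank_bot, zero_add] at h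

lemma card_flagJumps_singleton {i : Fin n} {U : Submodule K (Fin n → K)}
    (hi : Pi.single i 1 ∉ U) : #(flagJumps {i} U) = finrank K U := by
  have hdisj : U ⊓ coordSubspace {i} = ⊥ := by
    rw [← span_single_image, coe_singleton, Set.image_singleton, ← disjoint_iff]
    exact (disjoint_span_singleton' (by simp)).mpr hi
  have h := finrank_inf_add_card_flagJumps {i} U
  rwa [hdisj, finrank_bot, zero_add] at h

end FinFlag

section Hat

variable {K : Type*} [Field K] {m : ℕ}

def hatSubspace (J : Finset (Fin (m + 1))) (j₀ : Fin (m + 1)) :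
    Submodule K (Fin (m + 1) → K) where
  carrier := {x | (∀ i ∉ insert (Fin.last m) J, x i = 0) ∧ x (Fin.last m) = x j₀}
  add_mem' hx hy := ⟨fun i hi => by simp [hx.1 i hi, hy.1 i hi], by simp [hx.2, hy.2]⟩
  zero_mem' := ⟨fun _ _ => rfl, rfl⟩
  smul_mem' c _ hx := ⟨fun i hi => by simp [hx.1 i hi], by simp [hx.2]⟩

variable {J : Finset (Fin (m + 1))} {j₀ : Fin (m + 1)}

lemma hatVector_mem_hatSubspace (hj₀ : j₀ ∈ J) (hj₀L : j₀ ≠ Fin.last m) :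
    Pi.single j₀ 1 + Pi.single (Fin.last m) 1 ∈ hatSubspace (K := K) J j₀ := by
  refine ⟨fun i hi => ?_, by simp [hj₀L, hj₀L.symm]⟩
  simp only [mem_insert, not_or] at hi
  have hij₀ : i ≠ j₀ := fun h => hi.2 (h ▸ hj₀)
  simp [hi.1, hij₀]

lemma single_mem_hatSubspace {j : Fin (m + 1)} (hj : j ∈ J) (hjj₀ : j ≠ j₀)
    (hjL : j ≠ Fin.last m) : Pi.single j 1 ∈ hatSubspace (K := K) J j₀ :=
  ⟨fun i hi => Pi.single_eq_of_ne (fun h : i = j => hi (mem_insert_of_mem (h ▸ hj))) _, by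
    simp [hjL.symm, hjj₀.symm]⟩

lemma span_hatVector_insert (hj₀ : j₀ ∈ J) (hL : Fin.last m ∉ J) :
    span K (insert (Pi.single j₀ 1 + Pi.single (Fin.last m) 1)
      ((fun i => Pi.single i (1 : K)) '' ↑(J.erase j₀))) = hatSubspace J j₀ := by
  have hj₀L : j₀ ≠ Fin.last m := fun h => hL (h ▸ hj₀)
  refine le_antisymm (span_le.mpr ?_) fun x hx => ?_
  · rintro _ (rfl | ⟨j, hj, rfl⟩)
    · exact hatVector_mem_hatSubspace hj₀ hj₀L
    · obtain ⟨hjj₀, hjJ⟩ := mem_erase.mp hj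
      exact single_mem_hatSubspace hjJ hjj₀ fun h => hL (h ▸ hjJ)
  · have hrest : x - x j₀ • (Pi.single j₀ 1 + Pi.single (Fin.last m) 1) ∈
        coordSubspace (J.erase j₀) := by
      intro i hi
      by_cases hij₀ : i = j₀
      · subst hij₀; simp [hj₀L]
      by_cases hiL : i = Fin.last m
      · subst hiL; simp [hj₀L.symm, hx.2]
      have hiJ : i ∉ J := fun h => hi (mem_erase.mpr ⟨hij₀, h⟩)
      simp [hij₀, hiL, hx.1 i (by simp [hiL, hiJ])]
    rw [← span_single_image] at hrest
    rw [← sub_add_cancel x (x j₀ • (Pi.single j₀ 1 + Pi.single (Fin.last m) 1))]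
    exact add_mem (span_mono (Set.subset_insert _ _) hrest)
      (smul_mem _ _ (subset_span (Set.mem_insert _ _)))

lemma flagJumps_empty_hatSubspace (hj₀ : j₀ ∈ J) (hL : Fin.last m ∉ J) :
    flagJumps ∅ (hatSubspace (K := K) J j₀) = insert (Fin.last m) (J.erase j₀) := by
  have hj₀L : j₀ ≠ Fin.last m := fun h => hL (h ▸ hj₀)
  ext j
  simp only [mem_flagJumps_iff, notMem_empty, not_false_eq_true, empty_union, true_and,
    mem_insert, mem_erase]
  constructor
  · rintro ⟨w, ⟨hsupp, hwL⟩, hwj, hw⟩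
    by_cases hjL : j = Fin.last m
    · exact Or.inl hjL
    have hwL0 : w (Fin.last m) = 0 := hwj _ (by simp [Fin.last_le_iff, hjL])
    refine Or.inr ⟨fun h => hw (h ▸ hwL ▸ hwL0), ?_⟩
    by_contra hjJ
    exact hw (hsupp j (by simp [hjL, hjJ]))
  · rintro (rfl | ⟨hjj₀, hjJ⟩)
    · exact ⟨_, hatVector_mem_hatSubspace hj₀ hj₀L,
        fun i hi => absurd (Fin.le_last i) (by simpa using hi), by simp [hj₀L.symm]⟩
    · exact ⟨_, single_mem_hatSubspace hjJ hjj₀ fun h => hL (h ▸ hjJ),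
        single_mem_coordSubspace (by simp) 1, by simp⟩

lemma flagJumps_last_hatSubspace (hj₀ : j₀ ∈ J) (hL : Fin.last m ∉ J) :
    flagJumps {Fin.last m} (hatSubspace (K := K) J j₀) = J := by
  have hj₀L : j₀ ≠ Fin.last m := fun h => hL (h ▸ hj₀)
  ext j
  simp only [mem_flagJumps_iff, mem_singleton]
  constructor
  · rintro ⟨hjL, w, ⟨hsupp, -⟩, -, hw⟩
    by_contra hjJ
    exact hw (hsupp j (by simp [hjL, hjJ]))
  · intro hjJ
    have hjL : j ≠ Fin.last m := fun h => hL (h ▸ hjJ)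
    refine ⟨hjL, ?_⟩
    by_cases hjj₀ : j = j₀
    · subst hjj₀
      refine ⟨_, hatVector_mem_hatSubspace hjJ hjL, fun i hi => ?_, by simp [hjL]⟩
      simp only [mem_union, mem_singleton, mem_Iic, not_or] at hi
      have hij : i ≠ j := fun h => hi.2 (h ▸ le_rfl)
      simp [hi.1, hij]
    · exact ⟨_, single_mem_hatSubspace hjJ hjj₀ hjL, single_mem_coordSubspace (by simp) 1,
        by simp⟩

lemma finrank_hatSubspace (hj₀ : j₀ ∈ J) (hL : Fin.last m ∉ J) :
    finrank K (hatSubspace (K := K) J j₀) = #J := by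
  rw [← card_flagJumps_empty, flagJumps_empty_hatSubspace hj₀ hL,
    card_insert_of_notMem (fun h => hL (mem_of_mem_erase h)), card_erase_add_one hj₀]

lemma exists_hatPivot {W : Submodule K (Fin (m + 1) → K)} (hLW : Fin.last m ∈ flagJumps ∅ W)
    (heL : Pi.single (Fin.last m) 1 ∉ W) :
    ∃ j₀ ∉ flagJumps ∅ W, j₀ ≠ Fin.last m ∧
      ∃ v ∈ W, v - Pi.single (Fin.last m) 1 ∈ coordSubspace (Iic j₀) ∧ v j₀ ≠ 0 := by
  have hsub : (flagJumps ∅ W).erase (Fin.last m) ⊆ flagJumps {Fin.last m} W := by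
    intro j hj
    obtain ⟨hjL, hjP⟩ := mem_erase.mp hj
    obtain ⟨-, w, hwW, hwj, hw⟩ := mem_flagJumps_iff.mp hjP
    exact mem_flagJumps_iff.mpr ⟨by simpa using hjL, w, hwW,
      coordSubspace_mono (union_subset_union_left (empty_subset _)) hwj, hw⟩
  have hlt : #((flagJumps ∅ W).erase (Fin.last m)) < #(flagJumps {Fin.last m} W) := by
    have := card_pos.mpr ⟨_, hLW⟩
    rw [card_erase_of_mem hLW, card_flagJumps_singleton heL, ← card_flagJumps_empty]
    omega
  obtain ⟨j₀, hj₀, hj₀P⟩ := exists_mem_notMem_of_card_lt_card hlt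
  obtain ⟨hj₀L, w, hwW, hwj, hw⟩ := mem_flagJumps_iff.mp hj₀
  have hj₀L : j₀ ≠ Fin.last m := by simpa using hj₀L
  have hj₀P : j₀ ∉ flagJumps ∅ W := fun h => hj₀P (mem_erase.mpr ⟨hj₀L, h⟩)
  have hsupp : ∀ i, i ≠ Fin.last m → ¬ i ≤ j₀ → w i = 0 := fun i hiL hij₀ =>
    hwj i (by simp [hiL, hij₀])
  -- otherwise `w` would witness a jump of the standard flag at `j₀`
  have hwL : w (Fin.last m) ≠ 0 := by
    intro hwL
    refine hj₀P (mem_flagJumps_iff.mpr ⟨notMem_empty _, w, hwW, fun i hi => ?_, hw⟩)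
    by_cases hiL : i = Fin.last m
    · rwa [hiL]
    · exact hsupp i hiL (by simpa using hi)
  refine ⟨j₀, hj₀P, hj₀L, (w (Fin.last m))⁻¹ • w, W.smul_mem _ hwW, fun i hi => ?_,
    by simp [hwL, hw]⟩
  by_cases hiL : i = Fin.last m
  · subst hiL; simp [hwL]
  · simp [hiL, hsupp i hiL (by simpa using hi)]

end Hat

section Borel

variable {m : ℕ} {g : Matrix (Fin (m + 1)) (Fin (m + 1)) ℂ}

lemma injective_toLin'_of_memB (hg : memB (m + 1) g) : Function.Injective (toLin' g) :=
  mulVec_injective_iff_isUnit.mpr hg.1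

lemma finrank_map_toLin'_of_memB (hg : memB (m + 1) g) (U : Submodule ℂ (Fin (m + 1) → ℂ)) :
    finrank ℂ (U.map (toLin' g)) = finrank ℂ U :=
  (equivMapOfInjective _ (injective_toLin'_of_memB hg) U).finrank_eq.symm

lemma map_toLin'_coordSubspace_of_memB (hg : memB (m + 1) g) {T : Finset (Fin (m + 1))}
    (hT : ∀ i j, i < j → j ∈ T → j ≠ Fin.last m → i ∈ T) :
    (coordSubspace T).map (toLin' g) = coordSubspace T := by
  refine eq_of_le_of_finrank_eq ?_ (finrank_map_toLin'_of_memB hg _)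
  rintro _ ⟨x, hx, rfl⟩ i hi
  simp only [toLin'_apply, mulVec, dotProduct]
  refine sum_eq_zero fun j _ => ?_
  by_cases hj : j ∈ T
  · rcases lt_trichotomy j i with hji | rfl | hij
    · rw [hg.2.1 i j hji, zero_mul]
    · exact absurd hj hi
    · obtain rfl : j = Fin.last m := by_contra fun hjL => hi (hT i j hij hj hjL)
      rw [hg.2.2.2 i _ (by simp) (by have := Fin.lt_def.mp hij; simp at this ⊢; omega), zero_mul]
  · rw [hx j hj, mul_zero]

lemma flagJumps_map_toLin'_of_memB (hg : memB (m + 1) g) {A : Finset (Fin (m + 1))}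
    (hA : A ⊆ {Fin.last m}) (U : Submodule ℂ (Fin (m + 1) → ℂ)) :
    flagJumps A (U.map (toLin' g)) = flagJumps A U := by
  refine flagJumps_map (injective_toLin'_of_memB hg) (fun j => ?_) (fun j => ?_) U
  · refine map_toLin'_coordSubspace_of_memB hg fun i j' hij' hj' hj'L => ?_
    rcases mem_union.mp hj' with hA' | hj'
    · exact absurd (mem_singleton.mp (hA hA')) hj'L
    · exact mem_union_right _ (mem_Iio.mpr (hij'.trans (mem_Iio.mp hj')))
  · refine map_toLin'_coordSubspace_of_memB hg fun i j' hij' hj' hj'L => ?_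
    rcases mem_union.mp hj' with hA' | hj'
    · exact absurd (mem_singleton.mp (hA hA')) hj'L
    · exact mem_union_right _ (mem_Iic.mpr (hij'.le.trans (mem_Iic.mp hj')))

lemma exists_memB_mulVec_single {S : Finset (Fin (m + 1))} (hS : Fin.last m ∉ S)
    (w : Fin (m + 1) → Fin (m + 1) → ℂ)
    (hw : ∀ j ∈ S, w j ∈ coordSubspace (Iic j) ∧ w j j ≠ 0) :
    ∃ g, memB (m + 1) g ∧ (∀ j ∈ S, g *ᵥ Pi.single j 1 = w j) ∧
      g *ᵥ Pi.single (Fin.last m) 1 = Pi.single (Fin.last m) 1 := by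
  let c : Fin (m + 1) → Fin (m + 1) → ℂ := fun j => if j ∈ S then w j else Pi.single j 1
  have hc : ∀ j, c j ∈ coordSubspace (Iic j) ∧ c j j ≠ 0 := fun j => by
    by_cases hj : j ∈ S
    · simpa [c, hj] using hw j hj
    · simpa [c, hj] using single_mem_coordSubspace (K := ℂ) (mem_Iic.mpr le_rfl) 1
  have hmul : ∀ j, Matrix.of (fun i j => c j i) *ᵥ Pi.single j 1 = c j := fun j => by
    ext i; simp
  have hupper : (Matrix.of fun i j => c j i).IsUpperTriangular := fun i j hji =>
    (hc j).1 i (by simpa using hji)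
  refine ⟨Matrix.of fun i j => c j i, ⟨?_, fun i j hji => hupper hji, fun i hi => ?_,
    fun i j hj hi => ?_⟩, fun j hj => by rw [hmul]; simp [c, hj], by rw [hmul]; simp [c, hS]⟩
  · rw [isUnit_iff_isUnit_det, det_of_isUpperTriangular hupper, isUnit_iff_ne_zero,
      prod_ne_zero_iff]
    exact fun j _ => (hc j).2
  · obtain rfl : i = Fin.last m := Fin.ext (by simp; omega)
    simp [c, hS]
  · obtain rfl : j = Fin.last m := Fin.ext (by simp; omega)
    have hiL : i ≠ Fin.last m := fun h => hi (by simp [h])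
    simp [c, hS, hiL]

lemma exists_memB_map_coordSubspace_flagJumps (W : Submodule ℂ (Fin (m + 1) → ℂ))
    (hW : Fin.last m ∈ flagJumps ∅ W → Pi.single (Fin.last m) 1 ∈ W) :
    ∃ g, memB (m + 1) g ∧ (coordSubspace (flagJumps ∅ W)).map (toLin' g) = W := by
  obtain ⟨w, hw⟩ := exists_pivotVectors W
  obtain ⟨g, hg, hgS, hgL⟩ := exists_memB_mulVec_single
    (notMem_erase (Fin.last m) (flagJumps ∅ W)) w fun j hj => (hw j (mem_of_mem_erase hj)).2
  refine ⟨g, hg, eq_of_le_of_finrank_eq ?_ ?_⟩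
  · rw [← span_single_image, map_span_le]
    rintro _ ⟨j, hj, rfl⟩
    rw [toLin'_apply]
    by_cases hjL : j = Fin.last m
    · subst hjL
      rw [hgL]
      exact hW hj
    · rw [hgS j (mem_erase.mpr ⟨hjL, hj⟩)]
      exact (hw j hj).1
  · rw [finrank_map_toLin'_of_memB hg, finrank_coordSubspace, card_flagJumps_empty]

lemma exists_memB_map_hatSubspace (W : Submodule ℂ (Fin (m + 1) → ℂ))
    (hLW : Fin.last m ∈ flagJumps ∅ W) (heL : Pi.single (Fin.last m) 1 ∉ W) :
    ∃ J j₀, j₀ ∈ J ∧ Fin.last m ∉ J ∧ #J = finrank ℂ W ∧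
      ∃ g, memB (m + 1) g ∧ (hatSubspace J j₀).map (toLin' g) = W := by
  obtain ⟨j₀, hj₀P, hj₀L, v, hvW, hv, hvj₀⟩ := exists_hatPivot hLW heL
  obtain ⟨w, hw⟩ := exists_pivotVectors W
  set J' := (flagJumps ∅ W).erase (Fin.last m)
  have hj₀J' : j₀ ∉ J' := fun h => hj₀P (mem_of_mem_erase h)
  have hL : Fin.last m ∉ insert j₀ J' := by simp [hj₀L.symm, J']
  have hcard : #(insert j₀ J') = finrank ℂ W := by
    rw [card_insert_of_notMem hj₀J', card_erase_add_one hLW, card_flagJumps_empty]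
  obtain ⟨g, hg, hgS, hgL⟩ := exists_memB_mulVec_single hL
    (Function.update w j₀ (v - Pi.single (Fin.last m) 1)) fun j hj => by
      rcases mem_insert.mp hj with rfl | hj
      · simpa [hj₀L] using And.intro hv hvj₀
      · rw [Function.update_of_ne (ne_of_mem_of_not_mem hj hj₀J')]
        exact (hw j (mem_of_mem_erase hj)).2
  refine ⟨insert j₀ J', j₀, mem_insert_self _ _, hL, hcard, g, hg,
    eq_of_le_of_finrank_eq ?_ ?_⟩
  · rw [← span_hatVector_insert (mem_insert_self _ _) hL, map_span_le, erase_insert hj₀J']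
    rintro _ (rfl | ⟨j, hj, rfl⟩)
    · rw [map_add, toLin'_apply, toLin'_apply, hgS j₀ (mem_insert_self _ _), hgL]
      simpa using hvW
    · rw [toLin'_apply, hgS j (mem_insert_of_mem hj),
        Function.update_of_ne (ne_of_mem_of_not_mem hj hj₀J')]
      exact (hw j (mem_of_mem_erase hj)).1
  · rw [finrank_map_toLin'_of_memB hg, finrank_hatSubspace (mem_insert_self _ _) hL, hcard]

end Borel

section Representatives

variable {m : ℕ}

lemma forall_mem_val_add_one_lt_iff {J : Finset (Fin (m + 1))} :
    (∀ j ∈ J, (j : ℕ) + 1 < m + 1) ↔ Fin.last m ∉ J := by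
  refine ⟨fun h hL => by simpa using h _ hL, fun h j hj => ?_⟩
  have : j ≠ Fin.last m := fun hjL => h (hjL ▸ hj)
  simpa [Fin.lt_last_iff_ne_last.mpr this] using Fin.val_lt_last this

lemma mem_repSet_iff {k : ℕ} {h : 1 ≤ m + 1} {R : Submodule ℂ (Fin (m + 1) → ℂ)} :
    R ∈ repSet (m + 1) k h ↔
      ((∃ J, Fin.last m ∉ J ∧ #J = k ∧ R = coordSubspace J) ∨
        ∃ J, Fin.last m ∉ J ∧ #J + 1 = k ∧ R = coordSubspace (insert (Fin.last m) J)) ∨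
      ∃ J j₀, j₀ ∈ J ∧ Fin.last m ∉ J ∧ #J = k ∧ R = hatSubspace J j₀ := by
  have hlast : ∀ h', (⟨m + 1 - 1, h'⟩ : Fin (m + 1)) = Fin.last m :=
    fun _ => Fin.ext (by simp)
  have hstd : stdVec (m + 1) = fun j => Pi.single j 1 := rfl
  have hhat : ∀ j₀, hatVec (m + 1) j₀ = Pi.single j₀ 1 + Pi.single (Fin.last m) 1 :=
    fun j₀ => by rw [hatVec, hlast]
  simp only [repSet, Set.mem_union, Set.mem_ofPred_eq, forall_mem_val_add_one_lt_iff, hlast, hstd,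
    hhat, span_single_image, span_insert_single_image]
  refine or_congr_right (exists_congr fun J => exists_congr fun j₀ => and_congr_right fun hj₀ =>
    and_congr_right fun hL => and_congr_right fun _ => ?_)
  rw [span_hatVector_insert hj₀ hL]

lemma insert_erase_ne_insert {α : Type*} [DecidableEq α] {a b : α} {s : Finset α} (ha : a ∉ s)
    (hb : b ∈ s) : insert a (s.erase b) ≠ insert a s := fun h => by
  have hmem : b ∈ insert a (s.erase b) := h ▸ mem_insert_of_mem hb
  simp only [mem_insert, mem_erase, ne_eq, not_true_eq_false, false_and, or_false] at hmem
  exact ha (hmem ▸ hb)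

lemma eq_of_flagJumps_eq {k₁ k₂ : ℕ} {h₁ : 1 ≤ m + 1} {h₂ : 1 ≤ m + 1}
    {R₁ R₂ : Submodule ℂ (Fin (m + 1) → ℂ)} (hR₁ : R₁ ∈ repSet (m + 1) k₁ h₁)
    (hR₂ : R₂ ∈ repSet (m + 1) k₂ h₂) (hE : flagJumps ∅ R₁ = flagJumps ∅ R₂)
    (hH : flagJumps {Fin.last m} R₁ = flagJumps {Fin.last m} R₂) : R₁ = R₂ := by
  rcases mem_repSet_iff.mp hR₁ with
    (⟨J₁, hL₁, -, rfl⟩ | ⟨J₁, hL₁, -, rfl⟩) | ⟨J₁, j₁, hj₁, hL₁, -, rfl⟩ <;>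
  rcases mem_repSet_iff.mp hR₂ with
    (⟨J₂, hL₂, -, rfl⟩ | ⟨J₂, hL₂, -, rfl⟩) | ⟨J₂, j₂, hj₂, hL₂, -, rfl⟩ <;>
  simp (disch := assumption) only [flagJumps_empty_coordSubspace,
    flagJumps_singleton_coordSubspace, flagJumps_singleton_coordSubspace_insert,
    flagJumps_empty_hatSubspace, flagJumps_last_hatSubspace] at hE hH <;>
  subst hH
  all_goals first | rfl | grind [insert_erase_ne_insert]

lemma exists_mem_repSet_map_eq (W : Submodule ℂ (Fin (m + 1) → ℂ)) :
    ∃ R ∈ repSet (m + 1) (finrank ℂ W) (by omega),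
      ∃ g, memB (m + 1) g ∧ R.map (toLin' g) = W := by
  by_cases hcoord : Fin.last m ∈ flagJumps ∅ W → Pi.single (Fin.last m) 1 ∈ W
  · obtain ⟨g, hg, hgW⟩ := exists_memB_map_coordSubspace_flagJumps W hcoord
    refine ⟨_, mem_repSet_iff.mpr (Or.inl ?_), g, hg, hgW⟩
    by_cases hL : Fin.last m ∈ flagJumps ∅ W
    · refine Or.inr ⟨_, notMem_erase _ _, ?_, by rw [insert_erase hL]⟩
      rw [card_erase_add_one hL, card_flagJumps_empty]
    · exact Or.inl ⟨_, hL, card_flagJumps_empty W, rfl⟩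
  · obtain ⟨hLW, heL⟩ := Classical.not_imp.mp hcoord
    obtain ⟨J, j₀, hj₀, hL, hcard, g, hg, hgW⟩ := exists_memB_map_hatSubspace W hLW heL
    exact ⟨_, mem_repSet_iff.mpr (Or.inr ⟨J, j₀, hj₀, hL, hcard, rfl⟩), g, hg, hgW⟩

end Representatives

end BorelOrbits

/-- Every `k`-dimensional subspace of `ℂⁿ` lies in the `B_{n-1}`-orbit
of exactly one representative subspace, and no two distinct representative subspaces lie
in the same `B_{n-1}`-orbit. -/
theorem statement15 (n k : ℕ) (hn : 2 ≤ n) :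
    (∀ W : Submodule ℂ (Fin n → ℂ), Module.finrank ℂ W = k →
      ∃! R : Submodule ℂ (Fin n → ℂ), R ∈ repSet n k (by omega) ∧
        ∃ g, memB n g ∧ R.map (Matrix.toLin' g) = W) ∧
    (∀ R₁ ∈ repSet n k (by omega : 1 ≤ n), ∀ R₂ ∈ repSet n k (by omega : 1 ≤ n),
      (∃ g, memB n g ∧ R₁.map (Matrix.toLin' g) = R₂) → R₁ = R₂) := by
  obtain ⟨m, rfl⟩ : ∃ m, n = m + 1 := ⟨n - 1, by omega⟩
  have hE := fun {g} (hg : memB (m + 1) g) =>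
    BorelOrbits.flagJumps_map_toLin'_of_memB hg (Finset.empty_subset _)
  have hH := fun {g} (hg : memB (m + 1) g) =>
    BorelOrbits.flagJumps_map_toLin'_of_memB hg subset_rfl
  refine ⟨fun W hW => ?_, fun R₁ hR₁ R₂ hR₂ ⟨g, hg, hmap⟩ => ?_⟩
  · obtain ⟨R, hR, g, hg, rfl⟩ := BorelOrbits.exists_mem_repSet_map_eq W
    rw [hW] at hR
    refine ⟨R, ⟨hR, g, hg, rfl⟩, fun R' ⟨hR', g', hg', hmap⟩ => ?_⟩
    refine BorelOrbits.eq_of_flagJumps_eq hR' hR ?_ ?_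
    · rw [← hE hg', hmap, hE hg]
    · rw [← hH hg', hmap, hH hg]
  · exact BorelOrbits.eq_of_flagJumps_eq hR₁ hR₂ (by rw [← hmap, hE hg])
      (by rw [← hmap, hH hg])

end
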